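/- arXiv:1712.10234 — 3 statements merged into one kernel-verified Lean document; each statement's English description precedes it below -/
import Mathlib

section
/- Let N_L, N_R ∈ ℕ, let Δ_L, Δ_R > 0 be real numbers, let a ∈ ℝ^{N_L+1}, A = diag(a), and let B ∈ ℝ^{(N_L+1)×(N_R+1)} be arbitrary. Let M_L ∈ ℝ^{(N_L+1)×(N_L+1)} and M_R ∈ ℝ^{(N_R+1)×(N_R+1)} be diagonal matrices and let P_{R2L} ∈ ℝ^{(N_L+1)×(N_R+1)}, P_{L2R} ∈ ℝ^{(N_R+1)×(N_L+1)} satisfy the scaled compatibility condition Δ_L P_{R2L}ᵀ M_L = Δ_R M_R P_{L2R}. Then Δ_L ⟨a, 𝔼(P_{R2L} Bᵀ)⟩_{M_L} = Δ_R ⟨𝟙^R, 𝔼(P_{L2R} A B)⟩_{M_R}. -/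
open Matrix BigOperators

/-- Discrete inner product `⟨a, b⟩_M := aᵀ M b`. -/
noncomputable def dip {n : ℕ} (M : Matrix (Fin n) (Fin n) ℝ) (a b : Fin n → ℝ) : ℝ :=
  a ⬝ᵥ M.mulVec b

/-!
Both sides are traces: `⟨a, 𝔼(X)⟩_{diag ω} = tr(diag ω · diag a · X)`. Transposing and cycling
the left-hand trace gathers the factor `P_{R2L}ᵀ M_L`, which the compatibility condition turns
into `M_R P_{L2R}`, leaving exactly the right-hand trace.
-/

namespace Matrix

variable {m n R : Type*} [Fintype m] [Fintype n] [CommSemiring R]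

theorem dotProduct_diagonal_mulVec_diag [DecidableEq n] (ω a : n → R) (X : Matrix n n R) :
    a ⬝ᵥ diagonal ω *ᵥ X.diag = trace (diagonal ω * diagonal a * X) := by
  simp only [dotProduct, mulVec_diagonal, diag, trace, diagonal_mul_diagonal, diagonal_mul]
  exact Finset.sum_congr rfl fun i _ => by ring

theorem trace_mul_mul_transpose (D : Matrix m m R) (P B : Matrix m n R) :
    trace (D * (P * Bᵀ)) = trace (Pᵀ * Dᵀ * B) := by
  rw [← trace_transpose, transpose_mul, transpose_mul, transpose_transpose, Matrix.mul_assoc,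
    trace_mul_comm]

end Matrix

theorem scaled_projection_inner_product_lemma_general
    (NL NR : ℕ) (ΔL ΔR : ℝ)
    (a : Fin (NL + 1) → ℝ)
    (ωL : Fin (NL + 1) → ℝ) (ωR : Fin (NR + 1) → ℝ)
    (B : Matrix (Fin (NL + 1)) (Fin (NR + 1)) ℝ)
    (PR2L : Matrix (Fin (NL + 1)) (Fin (NR + 1)) ℝ)
    (PL2R : Matrix (Fin (NR + 1)) (Fin (NL + 1)) ℝ)
    (hcompat : ΔL • (PR2L.transpose * Matrix.diagonal ωL)
      = ΔR • (Matrix.diagonal ωR * PL2R)) :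
    ΔL * dip (Matrix.diagonal ωL) a ((PR2L * B.transpose).diag)
      = ΔR * dip (Matrix.diagonal ωR) (fun _ => 1)
          ((PL2R * Matrix.diagonal a * B).diag) := by
  have hdiag : (diagonal ωL * diagonal a)ᵀ = diagonal ωL * diagonal a := by
    rw [diagonal_mul_diagonal, diagonal_transpose]
  calc ΔL * dip (diagonal ωL) a (PR2L * Bᵀ).diag
      = ΔL * trace (PR2Lᵀ * diagonal ωL * diagonal a * B) := by
        rw [dip, dotProduct_diagonal_mulVec_diag, trace_mul_mul_transpose, hdiag]
        simp only [Matrix.mul_assoc]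
    _ = trace ((ΔL • (PR2Lᵀ * diagonal ωL)) * diagonal a * B) := by
        rw [smul_mul, smul_mul, trace_smul, smul_eq_mul]
    _ = ΔR * trace (diagonal ωR * PL2R * diagonal a * B) := by
        rw [hcompat, smul_mul, smul_mul, trace_smul, smul_eq_mul]
    _ = ΔR * dip (diagonal ωR) (fun _ => 1) (PL2R * diagonal a * B).diag := by
        rw [dip, dotProduct_diagonal_mulVec_diag, diagonal_one, Matrix.mul_one]
        simp only [Matrix.mul_assoc]

/-- Scaled version of the key inner-product lemma (used for h-refinement,
Corollary 1): under `Δ_L P_{R2L}ᵀ M_L = Δ_R M_R P_{L2R}` one has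
`Δ_L ⟨a, 𝔼(P_{R2L} Bᵀ)⟩_{M_L} = Δ_R ⟨𝟙^R, 𝔼(P_{L2R} A B)⟩_{M_R}`. -/
theorem scaled_projection_inner_product_lemma
    (NL NR : ℕ) (ΔL ΔR : ℝ) (hΔL : 0 < ΔL) (hΔR : 0 < ΔR)
    (a : Fin (NL + 1) → ℝ)
    (ωL : Fin (NL + 1) → ℝ) (ωR : Fin (NR + 1) → ℝ)
    (B : Matrix (Fin (NL + 1)) (Fin (NR + 1)) ℝ)
    (PR2L : Matrix (Fin (NL + 1)) (Fin (NR + 1)) ℝ)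
    (PL2R : Matrix (Fin (NR + 1)) (Fin (NL + 1)) ℝ)
    (hcompat : ΔL • (PR2L.transpose * Matrix.diagonal ωL)
      = ΔR • (Matrix.diagonal ωR * PL2R)) :
    ΔL * dip (Matrix.diagonal ωL) a ((PR2L * B.transpose).diag)
      = ΔR * dip (Matrix.diagonal ωR) (fun _ => 1)
          ((PL2R * Matrix.diagonal a * B).diag) :=
  scaled_projection_inner_product_lemma_general NL NR ΔL ΔR a ωL ωR B PR2L PL2R hcompat
end

section
/- Let E ≥ 1, and for i = 1,…,E let N_{L_i} ∈ ℕ and Δ_{L_i} > 0; let N_R ∈ ℕ and Δ_R > 0. Let M_{L_i} ∈ ℝ^{(N_{L_i}+1)×(N_{L_i}+1)} and M_R ∈ ℝ^{(N_R+1)×(N_R+1)} be diagonal matrices, and let P_{R2L_i} ∈ ℝ^{(N_{L_i}+1)×(N_R+1)}, P_{L_i2R} ∈ ℝ^{(N_R+1)×(N_{L_i}+1)} satisfy Δ_{L_i} P_{R2L_i}ᵀ M_{L_i} = Δ_R M_R P_{L_i2R} for each i. For arbitrary flux matrices F_i ∈ ℝ^{(N_{L_i}+1)×(N_R+1)} define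 F^{L_i} := 𝔼(P_{R2L_i} F_iᵀ) and F^R := ∑_{i=1}^E 𝔼(P_{L_i2R} F_i). Then primary conservation holds at the non-conforming interface: Δ_R ⟨𝟙^R, F^R⟩_{M_R} − ∑_{i=1}^E Δ_{L_i} ⟨𝟙^{L_i}, F^{L_i}⟩_{M_{L_i}} = 0. -/
open Matrix BigOperators

/-!
Both sides are traces. Against the all-ones vector, `⟨𝟙, 𝔼(A)⟩_{diag ω} = tr (diag ω · A)`,
so the `i`-th left contribution is `Δ_{L_i} tr (M_{L_i} P_{R2L_i} F_iᵀ)`; transposing and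
cycling gives `tr ((Δ_{L_i} P_{R2L_i}ᵀ M_{L_i}) F_i)`, which the compatibility condition
turns into `tr ((Δ_R M_R P_{L_i2R}) F_i)`, the `i`-th right contribution.
-/

lemma dip_sum_right {n : ℕ} {ι : Type*} (s : Finset ι) (M : Matrix (Fin n) (Fin n) ℝ)
    (a : Fin n → ℝ) (v : ι → Fin n → ℝ) :
    dip M a (∑ i ∈ s, v i) = ∑ i ∈ s, dip M a (v i) := by
  simp only [dip, Matrix.mulVec_sum, dotProduct_sum]

lemma dip_diagonal_one_diag {n : ℕ} (w : Fin n → ℝ) (A : Matrix (Fin n) (Fin n) ℝ) :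
    dip (diagonal w) (fun _ => 1) A.diag = trace (diagonal w * A) := by
  simp [dip, trace, dotProduct, diagonal_mul, mulVec_diagonal]

lemma smul_trace_diagonal_mul_mul_of_compat {R m n : Type*} [CommSemiring R]
    [Fintype m] [Fintype n] [DecidableEq m] [DecidableEq n]
    {a b : R} {ωm : m → R} {ωn : n → R} {Q : Matrix m n R} {P : Matrix n m R}
    (h : a • (Qᵀ * diagonal ωm) = b • (diagonal ωn * P)) (F : Matrix m n R) :
    b * trace (diagonal ωn * (P * F)) = a * trace (diagonal ωm * (Q * Fᵀ)) := by
  calc b * trace (diagonal ωn * (P * F))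
      = trace ((b • (diagonal ωn * P)) * F) := by
        rw [Matrix.smul_mul, trace_smul, Matrix.mul_assoc, smul_eq_mul]
    _ = trace ((a • (Qᵀ * diagonal ωm)) * F) := by rw [h]
    _ = a * trace (F * (Qᵀ * diagonal ωm)) := by
        rw [Matrix.smul_mul, trace_smul, trace_mul_comm, smul_eq_mul]
    _ = a * trace (diagonal ωm * (Q * Fᵀ)) := by
        rw [← trace_transpose (diagonal ωm * (Q * Fᵀ))]
        simp only [transpose_mul, transpose_transpose, diagonal_transpose, Matrix.mul_assoc]

theorem primary_conservation_h_refinement_general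
    (E : ℕ) (NR : ℕ) (ΔR : ℝ)
    (NL : Fin E → ℕ) (ΔL : Fin E → ℝ)
    (ωL : (i : Fin E) → Fin (NL i + 1) → ℝ) (ωR : Fin (NR + 1) → ℝ)
    (PR2L : (i : Fin E) → Matrix (Fin (NL i + 1)) (Fin (NR + 1)) ℝ)
    (PL2R : (i : Fin E) → Matrix (Fin (NR + 1)) (Fin (NL i + 1)) ℝ)
    (hcompat : ∀ i, ΔL i • ((PR2L i).transpose * Matrix.diagonal (ωL i))
      = ΔR • (Matrix.diagonal ωR * PL2R i))
    (F : (i : Fin E) → Matrix (Fin (NL i + 1)) (Fin (NR + 1)) ℝ) :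
    ΔR * dip (Matrix.diagonal ωR) (fun _ => 1) (∑ i, (PL2R i * F i).diag)
      - ∑ i, ΔL i * dip (Matrix.diagonal (ωL i)) (fun _ => 1)
          ((PR2L i * (F i).transpose).diag) = 0 := by
  rw [sub_eq_zero, dip_sum_right, Finset.mul_sum]
  refine Finset.sum_congr rfl fun i _ => ?_
  rw [dip_diagonal_one_diag, dip_diagonal_one_diag]
  exact smul_trace_diagonal_mul_mul_of_compat (hcompat i) (F i)

/-- Primary conservation at an h-nonconforming interface (Corollary 1,
conservation part): `E` left elements of heights `Δ_{L_i}` coupled to one right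
element of height `Δ_R`. -/
theorem primary_conservation_h_refinement
    (E : ℕ) (hE : 1 ≤ E) (NR : ℕ) (ΔR : ℝ) (hΔR : 0 < ΔR)
    (NL : Fin E → ℕ) (ΔL : Fin E → ℝ) (hΔL : ∀ i, 0 < ΔL i)
    (ωL : (i : Fin E) → Fin (NL i + 1) → ℝ) (ωR : Fin (NR + 1) → ℝ)
    (PR2L : (i : Fin E) → Matrix (Fin (NL i + 1)) (Fin (NR + 1)) ℝ)
    (PL2R : (i : Fin E) → Matrix (Fin (NR + 1)) (Fin (NL i + 1)) ℝ)
    (hcompat : ∀ i, ΔL i • ((PR2L i).transpose * Matrix.diagonal (ωL i))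
      = ΔR • (Matrix.diagonal ωR * PL2R i))
    (F : (i : Fin E) → Matrix (Fin (NL i + 1)) (Fin (NR + 1)) ℝ) :
    ΔR * dip (Matrix.diagonal ωR) (fun _ => 1) (∑ i, (PL2R i * F i).diag)
      - ∑ i, ΔL i * dip (Matrix.diagonal (ωL i)) (fun _ => 1)
          ((PR2L i * (F i).transpose).diag) = 0 :=
  primary_conservation_h_refinement_general E NR ΔR NL ΔL ωL ωR PR2L PL2R hcompat F
end

section
/- Let N, M ∈ ℕ with M ≥ 1, let ω₀,…,ω_N ∈ ℝ, let J ∈ ℝ, and let Q ∈ ℝ^{(N+1)×(N+1)} satisfy Q + Qᵀ = B with B = diag(−1,0,…,0,1) and Q𝟙 = 0. Let F̃, G̃ : ℝ^M × ℝ^M → ℝ^M be symmetric and consistent with f̃, g̃, let v : ℝ^M → ℝ^M and ψ^f, ψ^g : ℝ^M → ℝ satisfy the entropy-conservation conditions (v(a) − v(b)) · F̃(a,b) = ψ^f(a) − ψ^f(b) and (v(a) − v(b)) · G̃(a,b) = ψ^g(a) − ψ^g(b) for all a, b ∈ ℝ^M. Let U : {0,…,N}² → ℝ^M, let F*⁺,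 F*⁻, G*⁺, G*⁻ : {0,…,N} → ℝ^M, and suppose (U_t)_{ij} satisfies the split-form DGSEM scheme J ω_i ω_j (U_t)_{ij} = −ω_j [2 ∑_{m=0}^N Q_{im} F̃(U_{ij},U_{mj}) + δ_{iN}(F*⁺_j − f̃(U_{Nj})) − δ_{i0}(F*⁻_j − f̃(U_{0j}))] − ω_i [2 ∑_{m=0}^N Q_{jm} G̃(U_{ij},U_{im}) + δ_{jN}(G*⁺_i − g̃(U_{iN})) − δ_{j0}(G*⁻_i − g̃(U_{i0}))]. Define (S_t)_{ij} := v(U_{ij}) · (U_t)_{ij}. Then J ∑_{i,j=0}^N ω_i ω_j (S_t)_{ij} = − ∑_{j=0}^N ω_j [(v(U_{Nj}) · F*⁺_j − ψ^f(U_{Nj})) − (v(U_{0j}) · F*⁻_j − ψ^f(U_{0j}))] − ∑_{i=0}^N ω_i [(v(U_{iN}) · G*⁺_i − ψ^g(U_{iN})) − (v(U_{i0}) · G*⁻_i − ψ^g(U_{i0}))]. -/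
open Matrix BigOperators

/-! Along every grid line the scheme is a one-dimensional SBP operator. Pairing its volume term
with the entropy variables and symmetrising with `Q + Qᵀ = B`, the entropy-conservation condition
turns it into `∑ Q_im (ψ_i - ψ_m)` plus diagonal terms; since `Q 𝟙 = 0` and hence `𝟙ᵀ Q = 𝟙ᵀ B`,
only `v · f - ψ` at the two end nodes survives, and the surface terms replace `f` there by the
numerical fluxes. Weighting the lines by `ω` and summing gives the identity. -/

noncomputable def boundaryMatrix (N : ℕ) : Matrix (Fin (N + 1)) (Fin (N + 1)) ℝ :=
  Matrix.diagonal (fun i =>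
    (if i = Fin.last N then (1 : ℝ) else 0) + (if i = 0 then (-1 : ℝ) else 0))

section SBP

variable {ι κ R : Type*} [Fintype ι] [DecidableEq ι] [Fintype κ] [CommRing R]
  {Q : Matrix ι ι R} {d : ι → R}

theorem sum_apply_eq_of_add_transpose_eq_diagonal (hSBP : Q + Qᵀ = diagonal d)
    (hrow : Q *ᵥ (fun _ => 1) = 0) (m : ι) : ∑ i, Q i m = d m := by
  have hcol : ∀ i, Q i m = diagonal d m i - Q m i := fun i => by
    rw [← hSBP, Matrix.add_apply, transpose_apply]; ring
  have hrow_m : ∑ i, Q m i = 0 := by simpa [mulVec, dotProduct] using congrFun hrow m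
  simp [hcol, Finset.sum_sub_distrib, hrow_m, diagonal_apply]

theorem sum_sum_mul_sub_eq_of_add_transpose_eq_diagonal (hSBP : Q + Qᵀ = diagonal d)
    (hrow : Q *ᵥ (fun _ => 1) = 0) (ψ : ι → R) :
    ∑ i, ∑ m, Q i m * (ψ i - ψ m) = -∑ i, d i * ψ i := by
  have hrow_i : ∀ i, ∑ m, Q i m = 0 := fun i => by
    simpa [mulVec, dotProduct] using congrFun hrow i
  calc ∑ i, ∑ m, Q i m * (ψ i - ψ m)
      = ∑ i, (∑ m, Q i m) * ψ i - ∑ m, (∑ i, Q i m) * ψ m := by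
        simp only [mul_sub, Finset.sum_sub_distrib, Finset.sum_mul]
        rw [Finset.sum_comm (f := fun i m => Q i m * ψ m)]
    _ = -∑ i, d i * ψ i := by
        simp [hrow_i, sum_apply_eq_of_add_transpose_eq_diagonal hSBP hrow]

theorem two_mul_sum_sum_mul_dotProduct_eq_of_entropyConservative
    (hSBP : Q + Qᵀ = diagonal d) (hrow : Q *ᵥ (fun _ => 1) = 0)
    (F : ι → ι → κ → R) (hsym : ∀ i m, F i m = F m i) (v : ι → κ → R) (ψ : ι → R)
    (hEC : ∀ i m, (v i - v m) ⬝ᵥ F i m = ψ i - ψ m) :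
    2 * ∑ i, ∑ m, Q i m * (v i ⬝ᵥ F i m) = ∑ i, d i * (v i ⬝ᵥ F i i - ψ i) := by
  have hswap :
      ∑ i, ∑ m, Q i m * (v i ⬝ᵥ F i m) = ∑ i, ∑ m, Q m i * (v m ⬝ᵥ F i m) := by
    rw [Finset.sum_comm]; simp only [hsym]
  have hpair : ∀ i m, Q i m * (v i ⬝ᵥ F i m) + Q m i * (v m ⬝ᵥ F i m)
      = Q i m * (ψ i - ψ m) + diagonal d i m * (v m ⬝ᵥ F i m) := fun i m => by
    rw [← hEC, ← hSBP, Matrix.add_apply, transpose_apply, sub_dotProduct]; ring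
  calc 2 * ∑ i, ∑ m, Q i m * (v i ⬝ᵥ F i m)
      = ∑ i, ∑ m, (Q i m * (v i ⬝ᵥ F i m) + Q m i * (v m ⬝ᵥ F i m)) := by
        rw [two_mul]; nth_rw 2 [hswap]; simp only [Finset.sum_add_distrib]
    _ = ∑ i, ∑ m, Q i m * (ψ i - ψ m)
          + ∑ i, ∑ m, diagonal d i m * (v m ⬝ᵥ F i m) := by
        simp only [hpair, Finset.sum_add_distrib]
    _ = ∑ i, d i * (v i ⬝ᵥ F i i - ψ i) := by
        rw [sum_sum_mul_sub_eq_of_add_transpose_eq_diagonal hSBP hrow]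
        simp [diagonal_apply, mul_sub, Finset.sum_sub_distrib]
        ring

end SBP

theorem sum_ite_last_add_ite_zero_mul {N : ℕ} (g : Fin (N + 1) → ℝ) :
    ∑ i, ((if i = Fin.last N then (1 : ℝ) else 0) + (if i = 0 then (-1 : ℝ) else 0)) * g i
      = g (Fin.last N) - g 0 := by
  simp [add_mul, ite_mul, Finset.sum_add_distrib, sub_eq_add_neg]

section SplitForm

variable {N : ℕ} {X κ : Type*} [Fintype κ]

/-- The bracket of the split-form DGSEM scheme along one grid line `u`. -/
noncomputable def splitFormResidual (Q : Matrix (Fin (N + 1)) (Fin (N + 1)) ℝ)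
    (F : X → X → κ → ℝ) (f : X → κ → ℝ) (u : Fin (N + 1) → X) (Fp Fm : κ → ℝ)
    (i : Fin (N + 1)) : κ → ℝ :=
  (2 : ℝ) • (∑ m, Q i m • F (u i) (u m))
    + (if i = Fin.last N then (1 : ℝ) else 0) • (Fp - f (u (Fin.last N)))
    - (if i = 0 then (1 : ℝ) else 0) • (Fm - f (u 0))

theorem sum_dotProduct_splitFormResidual {Q : Matrix (Fin (N + 1)) (Fin (N + 1)) ℝ}
    (hSBP : Q + Qᵀ = boundaryMatrix N) (hrow : Q *ᵥ (fun _ => 1) = 0)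
    {F : X → X → κ → ℝ} {f : X → κ → ℝ} (hsym : ∀ a b, F a b = F b a)
    (hcons : ∀ a, F a a = f a) {v : X → κ → ℝ} {ψ : X → ℝ}
    (hEC : ∀ a b, (v a - v b) ⬝ᵥ F a b = ψ a - ψ b) (u : Fin (N + 1) → X)
    (Fp Fm : κ → ℝ) :
    ∑ i, v (u i) ⬝ᵥ splitFormResidual Q F f u Fp Fm i
      = (v (u (Fin.last N)) ⬝ᵥ Fp - ψ (u (Fin.last N))) - (v (u 0) ⬝ᵥ Fm - ψ (u 0)) := by
  have hvolume := two_mul_sum_sum_mul_dotProduct_eq_of_entropyConservative hSBP hrow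
    (fun i m => F (u i) (u m)) (fun i m => hsym _ _) (fun i => v (u i)) (fun i => ψ (u i))
    (fun i m => hEC _ _)
  simp only [hcons, sum_ite_last_add_ite_zero_mul] at hvolume
  simp only [splitFormResidual, dotProduct_sub, dotProduct_add, dotProduct_smul,
    dotProduct_sum, smul_eq_mul, Finset.sum_sub_distrib, Finset.sum_add_distrib,
    ← Finset.mul_sum, ite_mul, one_mul, zero_mul, Finset.sum_ite_eq', Finset.mem_univ,
    if_true]
  rw [hvolume]
  ring

end SplitForm

theorem splitform_dgsem_entropy_growth_general
    (N M : ℕ)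
    (ω : Fin (N + 1) → ℝ) (J : ℝ)
    (Q : Matrix (Fin (N + 1)) (Fin (N + 1)) ℝ)
    (hSBP : Q + Q.transpose = boundaryMatrix N)
    (hconsistent : Q.mulVec (fun _ => 1) = 0)
    (Ftil Gtil : (Fin M → ℝ) → (Fin M → ℝ) → (Fin M → ℝ))
    (ftil gtil : (Fin M → ℝ) → (Fin M → ℝ))
    (hFsym : ∀ a b, Ftil a b = Ftil b a)
    (hGsym : ∀ a b, Gtil a b = Gtil b a)
    (hFcons : ∀ a, Ftil a a = ftil a)
    (hGcons : ∀ a, Gtil a a = gtil a)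
    (v : (Fin M → ℝ) → (Fin M → ℝ))
    (ψf ψg : (Fin M → ℝ) → ℝ)
    (hFEC : ∀ a b, (v a - v b) ⬝ᵥ Ftil a b = ψf a - ψf b)
    (hGEC : ∀ a b, (v a - v b) ⬝ᵥ Gtil a b = ψg a - ψg b)
    (U Ut : Fin (N + 1) → Fin (N + 1) → (Fin M → ℝ))
    (Fsp Fsm Gsp Gsm : Fin (N + 1) → (Fin M → ℝ))
    (hscheme : ∀ i j,
      (J * ω i * ω j) • Ut i j =
        -(ω j • ((2 : ℝ) • (∑ m, Q i m • Ftil (U i j) (U m j))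
            + (if i = Fin.last N then (1 : ℝ) else 0) •
                (Fsp j - ftil (U (Fin.last N) j))
            - (if i = 0 then (1 : ℝ) else 0) • (Fsm j - ftil (U 0 j))))
        - ω i • ((2 : ℝ) • (∑ m, Q j m • Gtil (U i j) (U i m))
            + (if j = Fin.last N then (1 : ℝ) else 0) •
                (Gsp i - gtil (U i (Fin.last N)))
            - (if j = 0 then (1 : ℝ) else 0) • (Gsm i - gtil (U i 0)))) :
    J * ∑ i, ∑ j, ω i * ω j * (v (U i j) ⬝ᵥ Ut i j)
      = -(∑ j, ω j * ((v (U (Fin.last N) j) ⬝ᵥ Fsp j - ψf (U (Fin.last N) j))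
            - (v (U 0 j) ⬝ᵥ Fsm j - ψf (U 0 j))))
        - ∑ i, ω i * ((v (U i (Fin.last N)) ⬝ᵥ Gsp i - ψg (U i (Fin.last N)))
            - (v (U i 0) ⬝ᵥ Gsm i - ψg (U i 0))) := by
  have hscheme_residual : ∀ i j, (J * ω i * ω j) • Ut i j =
      -(ω j • splitFormResidual Q Ftil ftil (fun i => U i j) (Fsp j) (Fsm j) i)
        - ω i • splitFormResidual Q Gtil gtil (U i) (Gsp i) (Gsm i) j := hscheme
  have hxline := fun j => sum_dotProduct_splitFormResidual hSBP hconsistent hFsym hFcons hFEC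
    (fun i => U i j) (Fsp j) (Fsm j)
  have hyline := fun i => sum_dotProduct_splitFormResidual hSBP hconsistent hGsym hGcons hGEC
    (U i) (Gsp i) (Gsm i)
  calc J * ∑ i, ∑ j, ω i * ω j * (v (U i j) ⬝ᵥ Ut i j)
      = ∑ i, ∑ j, v (U i j) ⬝ᵥ ((J * ω i * ω j) • Ut i j) := by
        simp only [Finset.mul_sum, dotProduct_smul, smul_eq_mul, mul_assoc]
    _ = -(∑ j, ω j * ∑ i, v (U i j) ⬝ᵥ
            splitFormResidual Q Ftil ftil (fun i => U i j) (Fsp j) (Fsm j) i)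
          - ∑ i, ω i * ∑ j, v (U i j) ⬝ᵥ
            splitFormResidual Q Gtil gtil (U i) (Gsp i) (Gsm i) j := by
        simp only [hscheme_residual, dotProduct_sub, dotProduct_neg, dotProduct_smul, smul_eq_mul,
          Finset.sum_sub_distrib, Finset.sum_neg_distrib, Finset.mul_sum]
        rw [Finset.sum_comm (f := fun i j => ω j * _)]
    _ = _ := by simp only [hxline, hyline]

/-- Lemma 1 of the paper, entropy part: contracting the split-form DGSEM with
the entropy variables, the total entropy growth reduces to surface terms. -/
theorem splitform_dgsem_entropy_growth
    (N M : ℕ) (hM : 1 ≤ M)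
    (ω : Fin (N + 1) → ℝ) (J : ℝ)
    (Q : Matrix (Fin (N + 1)) (Fin (N + 1)) ℝ)
    (hSBP : Q + Q.transpose = boundaryMatrix N)
    (hconsistent : Q.mulVec (fun _ => 1) = 0)
    (Ftil Gtil : (Fin M → ℝ) → (Fin M → ℝ) → (Fin M → ℝ))
    (ftil gtil : (Fin M → ℝ) → (Fin M → ℝ))
    (hFsym : ∀ a b, Ftil a b = Ftil b a)
    (hGsym : ∀ a b, Gtil a b = Gtil b a)
    (hFcons : ∀ a, Ftil a a = ftil a)
    (hGcons : ∀ a, Gtil a a = gtil a)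
    (v : (Fin M → ℝ) → (Fin M → ℝ))
    (ψf ψg : (Fin M → ℝ) → ℝ)
    (hFEC : ∀ a b, (v a - v b) ⬝ᵥ Ftil a b = ψf a - ψf b)
    (hGEC : ∀ a b, (v a - v b) ⬝ᵥ Gtil a b = ψg a - ψg b)
    (U Ut : Fin (N + 1) → Fin (N + 1) → (Fin M → ℝ))
    (Fsp Fsm Gsp Gsm : Fin (N + 1) → (Fin M → ℝ))
    (hscheme : ∀ i j,
      (J * ω i * ω j) • Ut i j =
        -(ω j • ((2 : ℝ) • (∑ m, Q i m • Ftil (U i j) (U m j))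
            + (if i = Fin.last N then (1 : ℝ) else 0) •
                (Fsp j - ftil (U (Fin.last N) j))
            - (if i = 0 then (1 : ℝ) else 0) • (Fsm j - ftil (U 0 j))))
        - ω i • ((2 : ℝ) • (∑ m, Q j m • Gtil (U i j) (U i m))
            + (if j = Fin.last N then (1 : ℝ) else 0) •
                (Gsp i - gtil (U i (Fin.last N)))
            - (if j = 0 then (1 : ℝ) else 0) • (Gsm i - gtil (U i 0)))) :
    J * ∑ i, ∑ j, ω i * ω j * (v (U i j) ⬝ᵥ Ut i j)
      = -(∑ j, ω j * ((v (U (Fin.last N) j) ⬝ᵥ Fsp j - ψf (U (Fin.last N) j))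
            - (v (U 0 j) ⬝ᵥ Fsm j - ψf (U 0 j))))
        - ∑ i, ω i * ((v (U i (Fin.last N)) ⬝ᵥ Gsp i - ψg (U i (Fin.last N)))
            - (v (U i 0) ⬝ᵥ Gsm i - ψg (U i 0))) :=
  splitform_dgsem_entropy_growth_general N M ω J Q hSBP hconsistent Ftil Gtil ftil gtil hFsym hGsym
    hFcons hGcons v ψf ψg hFEC hGEC U Ut Fsp Fsm Gsp Gsm hscheme
end
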